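/- Let d ≠ 0, ζ, μ, f₀ ∈ ℝ, let V : ℝ → ℝ be 2π-periodic and continuously differentiable, and let u*, φ* : ℝ → ℂ be 2π-periodic C² functions such that u* is a stationary solution with parameter ε = 0, L_{u*}* φ* = 0, and Re ∫_{−π}^{π} i u*'(x) conj(φ*(x)) dx = 1. Suppose ε ↦ u(ε), ε ↦ v(ε) are families of 2π-periodic functions, jointly C³ in (x, ε) on ℝ × (−ε*, ε*), and λ₀ : (−ε*, ε*) → ℝ is continuously differentiable, such that for every ε: u(ε) is a stationary solution with parameter ε, the pair (Re v(ε), Im v(ε)) composed into w(ε) := ((v(ε))₁, (v(ε))₂) satisfies L̃_{u(ε),ε} w(ε) = λ₀(ε) w(ε), u(0) = u*, λ₀(0) = 0, and v(0) = u*'. Then λ₀'(0) = − Re ∫_{−π}^{π} i V'(x) u*'(x) conj(φ*(x)) dx. -/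

import Mathlib

noncomputable section

open Real MeasureTheory Set

/-- 2π-periodicity. -/
def Per (f : ℝ → ℂ) : Prop := Function.Periodic f (2 * Real.pi)

/-- Squared L² norm on [-π, π]. -/
def L2sq (v : ℝ → ℂ) : ℝ := ∫ x in (-Real.pi)..Real.pi, ‖v x‖ ^ 2

/-- L² norm on [-π, π]. -/
def L2norm (v : ℝ → ℂ) : ℝ := Real.sqrt (L2sq v)

/-- H¹ norm. -/
def H1norm (v : ℝ → ℂ) : ℝ := Real.sqrt (L2sq v + L2sq (deriv v))

/-- H² norm. -/
def H2norm (v : ℝ → ℂ) : ℝ :=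
  Real.sqrt (L2sq v + L2sq (deriv v) + L2sq (deriv (deriv v)))

/-- A stationary solution of the (perturbed) Lugiato–Lefever equation with parameter ε:
a 2π-periodic C² function `u` with
`-d u'' + i ε V u' + (ζ - iμ) u - |u|² u + i f₀ = 0`. -/
def StatSol (d ζ μ f₀ ε : ℝ) (V : ℝ → ℝ) (u : ℝ → ℂ) : Prop :=
  ContDiff ℝ 2 u ∧ Per u ∧ ∀ x : ℝ,
    -(d : ℂ) * deriv (deriv u) x + Complex.I * (ε : ℂ) * (V x : ℂ) * deriv u x
      + ((ζ : ℂ) - Complex.I * (μ : ℂ)) * u x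
      - ((‖u x‖ ^ 2 : ℝ) : ℂ) * u x + Complex.I * (f₀ : ℂ) = 0

/-- The linearized operator `L_u φ = -d φ'' + (ζ - iμ - 2|u|²) φ - u² conj(φ)`. -/
def Lop (d ζ μ : ℝ) (u φ : ℝ → ℂ) : ℝ → ℂ := fun x =>
  -(d : ℂ) * deriv (deriv φ) x
    + ((ζ : ℂ) - Complex.I * (μ : ℂ) - 2 * ((‖u x‖ ^ 2 : ℝ) : ℂ)) * φ x
    - (u x) ^ 2 * (starRingEnd ℂ) (φ x)

/-- The adjoint linearized operator `L_u* ψ = -d ψ'' + (ζ + iμ - 2|u|²) ψ - u² conj(ψ)`. -/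
def LopAdj (d ζ μ : ℝ) (u ψ : ℝ → ℂ) : ℝ → ℂ := fun x =>
  -(d : ℂ) * deriv (deriv ψ) x
    + ((ζ : ℂ) + Complex.I * (μ : ℂ) - 2 * ((‖u x‖ ^ 2 : ℝ) : ℂ)) * ψ x
    - (u x) ^ 2 * (starRingEnd ℂ) (ψ x)

/-- Non-degeneracy: every 2π-periodic C² solution of `L_{u₀} φ = 0` is a real
multiple of `u₀'`. -/
def NonDeg (d ζ μ : ℝ) (u₀ : ℝ → ℂ) : Prop :=
  ∀ φ : ℝ → ℂ, ContDiff ℝ 2 φ → Per φ → (∀ x, Lop d ζ μ u₀ φ x = 0) →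
    ∃ a : ℝ, ∀ x, φ x = (a : ℂ) * deriv u₀ x

/-- The effective potential `V_eff(σ) = Re ∫ i V(x+σ) u₀'(x) conj(φ₀*(x)) dx`. -/
def Veff (V : ℝ → ℝ) (u₀ φ₀ : ℝ → ℂ) (σ : ℝ) : ℝ :=
  (∫ x in (-Real.pi)..Real.pi,
    Complex.I * (V (x + σ) : ℂ) * deriv u₀ x * (starRingEnd ℂ) (φ₀ x)).re

/-- The expression `Re ∫ i V'(x+σ) u₀'(x) conj(φ₀*(x)) dx` for `V_eff'(σ)`. -/
def VeffD (V : ℝ → ℝ) (u₀ φ₀ : ℝ → ℂ) (σ : ℝ) : ℝ :=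
  (∫ x in (-Real.pi)..Real.pi,
    Complex.I * ((deriv V (x + σ) : ℝ) : ℂ) * deriv u₀ x * (starRingEnd ℂ) (φ₀ x)).re

/-- A pair of complex-valued functions on ℝ. -/
abbrev FPair := (ℝ → ℂ) × (ℝ → ℂ)

/-- The self-adjoint part `A_u` of the linearization, acting on pairs. -/
def Aop (d ζ : ℝ) (u : ℝ → ℂ) (w : FPair) : FPair :=
  (fun x => -(d : ℂ) * deriv (deriv w.1) x
      + ((ζ : ℂ) - 3 * ((u x).re : ℂ) ^ 2 - ((u x).im : ℂ) ^ 2) * w.1 x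
      - 2 * ((u x).re : ℂ) * ((u x).im : ℂ) * w.2 x,
   fun x => -(d : ℂ) * deriv (deriv w.2) x
      + ((ζ : ℂ) - ((u x).re : ℂ) ^ 2 - 3 * ((u x).im : ℂ) ^ 2) * w.2 x
      - 2 * ((u x).re : ℂ) * ((u x).im : ℂ) * w.1 x)

/-- The symplectic matrix `J (w₁, w₂) = (w₂, -w₁)`. -/
def Jop (w : FPair) : FPair := (w.2, fun x => -(w.1 x))

/-- The linearization `L̃_{u,ε} w = J (A_u w) - μ w + ε V (w₁', w₂')`. -/
def Ltilde (d ζ μ ε : ℝ) (V : ℝ → ℝ) (u : ℝ → ℂ) (w : FPair) : FPair :=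
  (fun x => (Jop (Aop d ζ u w)).1 x - (μ : ℂ) * w.1 x + (ε : ℂ) * (V x : ℂ) * deriv w.1 x,
   fun x => (Jop (Aop d ζ u w)).2 x - (μ : ℂ) * w.2 x + (ε : ℂ) * (V x : ℂ) * deriv w.2 x)

/-- Admissible pair: both components are 2π-periodic and C². -/
def AdmPair (w : FPair) : Prop :=
  ContDiff ℝ 2 w.1 ∧ ContDiff ℝ 2 w.2 ∧ Per w.1 ∧ Per w.2

/-- `lam` is an eigenvalue of `L̃_{u,ε}`. -/
def IsEig (d ζ μ ε : ℝ) (V : ℝ → ℝ) (u : ℝ → ℂ) (lam : ℂ) : Prop :=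
  ∃ w : FPair, AdmPair w ∧ ¬ (∀ x, w.1 x = 0 ∧ w.2 x = 0) ∧
    ∀ x, (Ltilde d ζ μ ε V u w).1 x = lam * w.1 x ∧
         (Ltilde d ζ μ ε V u w).2 x = lam * w.2 x

/-- Spectral stability: every eigenvalue has nonpositive real part. -/
def SpecStable (d ζ μ ε : ℝ) (V : ℝ → ℝ) (u : ℝ → ℂ) : Prop :=
  ∀ lam : ℂ, IsEig d ζ μ ε V u lam → lam.re ≤ 0

/-- Spectral instability: some eigenvalue has positive real part. -/
def SpecUnstable (d ζ μ ε : ℝ) (V : ℝ → ℝ) (u : ℝ → ℂ) : Prop :=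
  ∃ lam : ℂ, IsEig d ζ μ ε V u lam ∧ 0 < lam.re

/-- Assumption (A2): 0 is an eigenvalue of `L̃_{u₀,0}`, algebraically simple with
eigenspace spanned by `(Re u₀', Im u₀')`, and the rest of the eigenvalues have
real part at most `-ξ < 0`. -/
def AssumptionA2 (d ζ μ : ℝ) (u₀ : ℝ → ℂ) : Prop :=
  IsEig d ζ μ 0 (fun _ => 0) u₀ 0 ∧
  (∀ w : FPair, AdmPair w →
      (∀ x, (Ltilde d ζ μ 0 (fun _ => 0) u₀ w).1 x = 0 ∧
            (Ltilde d ζ μ 0 (fun _ => 0) u₀ w).2 x = 0) →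
      ∃ c : ℂ, ∀ x, w.1 x = c * ((deriv u₀ x).re : ℂ) ∧
                    w.2 x = c * ((deriv u₀ x).im : ℂ)) ∧
  (¬ ∃ w : FPair, AdmPair w ∧
      ∀ x, (Ltilde d ζ μ 0 (fun _ => 0) u₀ w).1 x = ((deriv u₀ x).re : ℂ) ∧
           (Ltilde d ζ μ 0 (fun _ => 0) u₀ w).2 x = ((deriv u₀ x).im : ℂ)) ∧
  (∃ ξ : ℝ, 0 < ξ ∧
    ∀ lam : ℂ, IsEig d ζ μ 0 (fun _ => 0) u₀ lam → lam ≠ 0 → lam.re ≤ -ξ)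

/-- The pair `(Re v, Im v)` of a complex-valued function, viewed as complex-valued
components. -/
def PairOf (v : ℝ → ℂ) : FPair :=
  (fun x => ((v x).re : ℂ), fun x => ((v x).im : ℂ))


/-!
Write the eigenvalue equation in complex form, `L_{u(ε)} v(ε) + iεV v(ε)' = iλ₀(ε) v(ε)`, test it
against `φ*` and move `L` onto `φ*` (`L_u` and `L_u*` are formally adjoint for the pairing
`Re ∫ f conj g`):
`Re ∫ v conj (L*_{u(ε)} φ*) + ε Re ∫ iV v' conj φ* = λ₀(ε) Re ∫ i v conj φ*`.
As `L*_{u*} φ* = 0`, `v(0) = u*'` and `λ₀(0) = 0`, differentiating at `ε = 0` gives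
`λ₀'(0) = Re ∫ u*' conj (∂_u L*[w] φ*) + Re ∫ iV u*'' conj φ*` with `w = ∂_ε u(0)`.
Testing the stationary equation against `φ*'` and differentiating likewise gives
`Re ∫ w conj (L*_{u*} φ*') + Re ∫ iV u*' conj φ*' = 0`. Differentiating `L*_{u*} φ* = 0` in `x`
gives `L*_{u*} φ*' = -∂_u L*[u*'] φ*`, so the `L*`-terms of the two identities cancel by the
symmetry of `∂_u L*`, and an integration by parts of the potential terms leaves the claim.
The ε-derivatives are taken only after integrating against fixed test functions, so no mixed
partial derivatives of `u` and `v` are needed.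
-/

open Filter Topology Metric ComplexConjugate

lemma ofReal_norm_sq_eq_mul_conj (z : ℂ) : ((‖z‖ ^ 2 : ℝ) : ℂ) = z * conj z := by
  push_cast; rw [Complex.mul_conj']

@[fun_prop]
lemma ContDiff.conj {n : WithTop ℕ∞} {f : ℝ → ℂ} (hf : ContDiff ℝ n f) :
    ContDiff ℝ n fun x => conj (f x) :=
  Complex.conjCLE.contDiff.comp hf

lemma HasDerivAt.re_comp {f : ℝ → ℂ} {f' : ℂ} {x : ℝ} (h : HasDerivAt f f' x) :
    HasDerivAt (fun y => (f y).re) f'.re x :=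
  Complex.reCLM.hasFDerivAt.comp_hasDerivAt x h

lemma HasDerivAt.im_comp {f : ℝ → ℂ} {f' : ℂ} {x : ℝ} (h : HasDerivAt f f' x) :
    HasDerivAt (fun y => (f y).im) f'.im x :=
  Complex.imCLM.hasFDerivAt.comp_hasDerivAt x h

lemma HasDerivAt.ofReal_norm_sq {f : ℝ → ℂ} {f' : ℂ} {t : ℝ} (hf : HasDerivAt f f' t) :
    HasDerivAt (fun s => ((‖f s‖ ^ 2 : ℝ) : ℂ)) (f' * conj (f t) + f t * conj f') t := by
  simp only [ofReal_norm_sq_eq_mul_conj]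
  exact hf.mul hf.star

lemma Function.Periodic.deriv {E : Type*} [NormedAddCommGroup E] [NormedSpace ℝ E]
    {f : ℝ → E} {c : ℝ} (hf : Function.Periodic f c) : Function.Periodic (deriv f) c := by
  intro x
  rw [← deriv_comp_add_const, show (fun y => f (y + c)) = f from funext hf]

lemma re_intervalIntegral_congr {a b : ℝ} {f g : ℝ → ℂ} (hf : Continuous f) (hg : Continuous g)
    (h : ∀ x, (f x).re = (g x).re) :
    (∫ x in a..b, f x).re = (∫ x in a..b, g x).re := by
  rw [← Complex.reCLM_apply, ← Complex.reCLM_apply,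
    ← Complex.reCLM.intervalIntegral_comp_comm (hf.intervalIntegrable _ _),
    ← Complex.reCLM.intervalIntegral_comp_comm (hg.intervalIntegrable _ _)]
  exact intervalIntegral.integral_congr fun x _ => h x

lemma HasDerivAt.mul_continuousAt_of_eq_zero {f g : ℝ → ℝ} {f' x₀ : ℝ} (hf : HasDerivAt f f' x₀)
    (hf₀ : f x₀ = 0) (hg : ContinuousAt g x₀) :
    HasDerivAt (fun x => f x * g x) (f' * g x₀) x₀ := by
  rw [hasDerivAt_iff_tendsto_slope] at hf ⊢
  refine (hf.mul (hg.tendsto.mono_left nhdsWithin_le_nhds)).congr'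
    (Eventually.of_forall fun x => ?_)
  simp only [slope_def_field, hf₀, zero_mul, sub_zero]
  ring

lemma HasDerivAt.add_eq_mul_of_eventually_add_mul_eq {P Q R lam : ℝ → ℝ} {P' lam' : ℝ}
    (hP : HasDerivAt P P' 0) (hQ : ContinuousAt Q 0) (hR : ContinuousAt R 0)
    (hlam : HasDerivAt lam lam' 0) (hlam₀ : lam 0 = 0)
    (h : ∀ᶠ ε in 𝓝 0, P ε + ε * Q ε = lam ε * R ε) :
    P' + Q 0 = lam' * R 0 := by
  have hL := hP.add ((hasDerivAt_id 0).mul_continuousAt_of_eq_zero rfl hQ)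
  rw [one_mul] at hL
  exact (hL.congr_of_eventuallyEq (h.mono fun ε hε => hε.symm)).unique
    (hlam.mul_continuousAt_of_eq_zero hlam₀ hR)

namespace Per

lemma apply_pi {f : ℝ → ℂ} (hf : Per f) : f π = f (-π) := by
  simpa [show -π + 2 * π = π by ring] using hf (-π)

lemma intervalIntegral_deriv_eq_zero {f : ℝ → ℂ} (hf : ContDiff ℝ 1 f) (hfp : Per f) :
    ∫ x in (-π)..π, deriv f x = 0 := by
  rw [intervalIntegral.integral_deriv_eq_sub (fun x _ => hf.differentiable one_ne_zero x)
    ((hf.continuous_deriv le_rfl).intervalIntegrable _ _), hfp.apply_pi, sub_self]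

lemma intervalIntegral_mul_deriv {f g : ℝ → ℂ} (hf : ContDiff ℝ 1 f) (hg : ContDiff ℝ 1 g)
    (hfp : Per f) (hgp : Per g) :
    ∫ x in (-π)..π, f x * deriv g x = -∫ x in (-π)..π, deriv f x * g x := by
  rw [intervalIntegral.integral_mul_deriv_eq_deriv_mul
    (fun x _ => (hf.differentiable one_ne_zero x).hasDerivAt)
    (fun x _ => (hg.differentiable one_ne_zero x).hasDerivAt)
    ((hf.continuous_deriv le_rfl).intervalIntegrable _ _)
    ((hg.continuous_deriv le_rfl).intervalIntegrable _ _), hfp.apply_pi, hgp.apply_pi,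
    sub_self, zero_sub]

lemma intervalIntegral_deriv_deriv_mul_conj {f ψ : ℝ → ℂ} (hf : ContDiff ℝ 2 f)
    (hψ : ContDiff ℝ 2 ψ) (hfp : Per f) (hψp : Per ψ) :
    ∫ x in (-π)..π, deriv (deriv f) x * conj (ψ x)
      = ∫ x in (-π)..π, f x * conj (deriv (deriv ψ) x) := by
  have hconj : ∀ g : ℝ → ℂ, deriv (fun x => conj (g x)) = fun x => conj (deriv g x) :=
    fun _ => deriv.star'
  have h₁ := intervalIntegral_mul_deriv (hψ.of_le one_le_two).conj hf.deriv' (hψp.comp conj)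
    (Function.Periodic.deriv hfp)
  have h₂ := intervalIntegral_mul_deriv (hf.of_le one_le_two) hψ.deriv'.conj hfp
    ((Function.Periodic.deriv hψp).comp conj)
  simp only [hconj] at h₁ h₂
  simp only [mul_comm (deriv (deriv f) _), h₁, h₂, mul_comm (deriv f _)]

lemma intervalIntegral_deriv_deriv_add_mul_conj (c : ℂ) {f h ψ : ℝ → ℂ}
    (hf : ContDiff ℝ 2 f) (hψ : ContDiff ℝ 2 ψ) (hh : Continuous h) (hfp : Per f) (hψp : Per ψ) :
    ∫ x in (-π)..π, (c * deriv (deriv f) x + h x) * conj (ψ x)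
      = ∫ x in (-π)..π, (c * f x * conj (deriv (deriv ψ) x) + h x * conj (ψ x)) := by
  have hf'' : Continuous (deriv (deriv f)) := hf.deriv'.continuous_deriv_one
  have hψ'' : Continuous (deriv (deriv ψ)) := hψ.deriv'.continuous_deriv_one
  have hψc := hψ.continuous
  simp only [add_mul, mul_assoc]
  rw [intervalIntegral.integral_add, intervalIntegral.integral_add,
    intervalIntegral.integral_const_mul, intervalIntegral.integral_const_mul,
    intervalIntegral_deriv_deriv_mul_conj hf hψ hfp hψp]
  all_goals apply Continuous.intervalIntegrable; fun_prop

lemma re_intervalIntegral_potential {V : ℝ → ℝ} {g φ : ℝ → ℂ} (hV : ContDiff ℝ 1 V)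
    (hVp : Function.Periodic V (2 * π)) (hg : ContDiff ℝ 1 g) (hgp : Per g)
    (hφ : ContDiff ℝ 1 φ) (hφp : Per φ) :
    (∫ x in (-π)..π, Complex.I * V x * deriv g x * conj (φ x)).re
        + (∫ x in (-π)..π, Complex.I * V x * g x * conj (deriv φ x)).re
      = -(∫ x in (-π)..π, Complex.I * ((deriv V x : ℝ) : ℂ) * g x * conj (φ x)).re := by
  have hVc : ContDiff ℝ 1 fun x => (V x : ℂ) := Complex.ofRealCLM.contDiff.comp hV
  have hV' := hV.continuous_deriv le_rfl
  have hg' := hg.continuous_deriv le_rfl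
  have hφ' := hφ.continuous_deriv le_rfl
  have hgc := hg.continuous
  have hφc := hφ.continuous
  have hVcc := hV.continuous
  have hF : ∀ x, HasDerivAt (fun x => Complex.I * V x * g x * conj (φ x))
      (Complex.I * ((deriv V x : ℝ) : ℂ) * g x * conj (φ x)
        + Complex.I * V x * deriv g x * conj (φ x)
        + Complex.I * V x * g x * conj (deriv φ x)) x := fun x => by
    have := (((hV.differentiable one_ne_zero x).hasDerivAt.ofReal_comp.const_mul
      Complex.I).fun_mul (hg.differentiable one_ne_zero x).hasDerivAt).fun_mul
      (hφ.differentiable one_ne_zero x).hasDerivAt.star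
    exact this.congr_deriv (by simp only [Complex.star_def]; ring)
  have h := intervalIntegral_deriv_eq_zero (by fun_prop)
    (show Per fun x => Complex.I * V x * g x * conj (φ x) from fun x => by
      simp only [hVp x, hgp x, hφp x])
  rw [funext fun x => (hF x).deriv,
    intervalIntegral.integral_add (by apply Continuous.intervalIntegrable; fun_prop)
      (by apply Continuous.intervalIntegrable; fun_prop),
    intervalIntegral.integral_add (by apply Continuous.intervalIntegrable; fun_prop)
      (by apply Continuous.intervalIntegrable; fun_prop)] at h
  have h' := congrArg Complex.re h
  simp only [Complex.add_re, Complex.zero_re] at h'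
  linarith

end Per

section Parametric

variable {E : Type*} [NormedAddCommGroup E] {F F' : ℝ × ℝ → E} {S : Set ℝ} {ε₀ : ℝ}

lemma ContinuousOn.continuous_slice (hF : ContinuousOn F (univ ×ˢ S)) {ε : ℝ} (hε : ε ∈ S) :
    Continuous fun x => F (x, ε) :=
  continuousOn_univ.mp (hF.comp (by fun_prop) fun _ _ => ⟨trivial, hε⟩)

lemma ContinuousOn.exists_bound_nhds (hF : ContinuousOn F (univ ×ˢ S)) (hS : S ∈ 𝓝 ε₀)
    (a b : ℝ) : ∃ M, ∀ᶠ ε in 𝓝 ε₀, ∀ x ∈ uIcc a b, ‖F (x, ε)‖ ≤ M := by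
  obtain ⟨δ, hδ, hδS⟩ := nhds_basis_closedBall.mem_iff.mp hS
  obtain ⟨M, hM⟩ := (isCompact_uIcc.prod (isCompact_closedBall ε₀ δ)).exists_bound_of_continuousOn
    (hF.mono (prod_mono (subset_univ _) hδS))
  exact ⟨M, eventually_of_mem (closedBall_mem_nhds ε₀ hδ) fun ε hε x hx => hM (x, ε) ⟨hx, hε⟩⟩

variable [NormedSpace ℝ E]

lemma continuousAt_intervalIntegral_of_continuousOn (hF : ContinuousOn F (univ ×ˢ S))
    (hS : S ∈ 𝓝 ε₀) (a b : ℝ) : ContinuousAt (fun ε => ∫ x in a..b, F (x, ε)) ε₀ := by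
  obtain ⟨M, hM⟩ := hF.exists_bound_nhds hS a b
  refine intervalIntegral.continuousAt_of_dominated_interval (bound := fun _ => M)
    (eventually_of_mem hS fun ε hε => (hF.continuous_slice hε).aestronglyMeasurable)
    (hM.mono fun ε hε => ae_of_all _ fun x hx => hε x (uIoc_subset_uIcc hx))
    intervalIntegrable_const (ae_of_all _ fun x _ => ?_)
  exact (hF.continuousAt (prod_mem_nhds univ_mem hS)).comp (by fun_prop)

lemma hasDerivAt_intervalIntegral_of_continuousOn (hF : ContinuousOn F (univ ×ˢ S))
    (hF' : ContinuousOn F' (univ ×ˢ S)) (hS : S ∈ 𝓝 ε₀)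
    (hderiv : ∀ ε ∈ S, ∀ x, HasDerivAt (fun e => F (x, e)) (F' (x, ε)) ε) (a b : ℝ) :
    HasDerivAt (fun ε => ∫ x in a..b, F (x, ε)) (∫ x in a..b, F' (x, ε₀)) ε₀ := by
  obtain ⟨M, hM⟩ := hF'.exists_bound_nhds hS a b
  have hε₀ : ε₀ ∈ S := mem_of_mem_nhds hS
  exact (intervalIntegral.hasDerivAt_integral_of_dominated_loc_of_deriv_le (inter_mem hS hM)
    (eventually_of_mem hS fun ε hε => (hF.continuous_slice hε).aestronglyMeasurable)
    ((hF.continuous_slice hε₀).intervalIntegrable _ _)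
    (hF'.continuous_slice hε₀).aestronglyMeasurable
    (ae_of_all _ fun x hx ε hε => hε.2 x (uIoc_subset_uIcc hx)) intervalIntegrable_const
    (ae_of_all _ fun x _ ε hε => hderiv ε hε.1 x)).2

variable {W : ℝ × ℝ → E}

lemma ContDiffOn.contDiff_slice {n : WithTop ℕ∞} (hW : ContDiffOn ℝ n W (univ ×ˢ S)) {ε : ℝ}
    (hε : ε ∈ S) : ContDiff ℝ n fun x => W (x, ε) :=
  contDiffOn_univ.mp (hW.comp (by fun_prop) fun _ _ => ⟨trivial, hε⟩)

lemma ContDiffOn.exists_hasDerivAt_snd (hW : ContDiffOn ℝ 1 W (univ ×ˢ S)) (hS : IsOpen S) :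
    ∃ W' : ℝ × ℝ → E, ContinuousOn W' (univ ×ˢ S) ∧
      ∀ ε ∈ S, ∀ x, HasDerivAt (fun e => W (x, e)) (W' (x, ε)) ε := by
  have hopen : IsOpen (univ ×ˢ S : Set (ℝ × ℝ)) := isOpen_univ.prod hS
  refine ⟨fun p => fderiv ℝ W p (0, 1),
    (hW.continuousOn_fderiv_of_isOpen hopen le_rfl).clm_apply continuousOn_const,
    fun ε hε x => ?_⟩
  have hWd := (hW.contDiffAt (hopen.mem_nhds (show (x, ε) ∈ univ ×ˢ S from ⟨trivial, hε⟩))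
    ).differentiableAt one_ne_zero
  exact hWd.hasFDerivAt.comp_hasDerivAt ε ((hasDerivAt_const ε x).prodMk (hasDerivAt_id ε))

lemma ContDiffOn.continuousOn_deriv_fst (hW : ContDiffOn ℝ 1 W (univ ×ˢ S)) (hS : IsOpen S) :
    ContinuousOn (fun p : ℝ × ℝ => deriv (fun x => W (x, p.2)) p.1) (univ ×ˢ S) := by
  have hopen : IsOpen (univ ×ˢ S : Set (ℝ × ℝ)) := isOpen_univ.prod hS
  refine ((hW.continuousOn_fderiv_of_isOpen hopen le_rfl).clm_apply
    (continuousOn_const (c := ((1 : ℝ), (0 : ℝ))))).congr fun p hp => ?_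
  have hWd := (hW.contDiffAt (hopen.mem_nhds hp)).differentiableAt one_ne_zero
  exact (hWd.hasFDerivAt.comp_hasDerivAt p.1
    ((hasDerivAt_id p.1).prodMk (hasDerivAt_const p.1 p.2))).deriv

end Parametric

lemma deriv_pairOf {v : ℝ → ℂ} (hv : Differentiable ℝ v) :
    deriv (PairOf v).1 = (PairOf (deriv v)).1 ∧ deriv (PairOf v).2 = (PairOf (deriv v)).2 :=
  ⟨funext fun x => (hv x).hasDerivAt.re_comp.ofReal_comp.deriv,
    funext fun x => (hv x).hasDerivAt.im_comp.ofReal_comp.deriv⟩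

lemma lop_add_eq_of_ltilde_pairOf {d ζ μ ε lam : ℝ} {V : ℝ → ℝ} {u v : ℝ → ℂ}
    (hv : ContDiff ℝ 2 v)
    (h : ∀ x, (Ltilde d ζ μ ε V u (PairOf v)).1 x = (lam : ℂ) * (PairOf v).1 x ∧
      (Ltilde d ζ μ ε V u (PairOf v)).2 x = (lam : ℂ) * (PairOf v).2 x) (x : ℝ) :
    Lop d ζ μ u v x + Complex.I * ε * V x * deriv v x = Complex.I * lam * v x := by
  obtain ⟨h₁, h₂⟩ := h x
  obtain ⟨d₁, d₂⟩ := deriv_pairOf (hv.differentiable two_ne_zero)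
  obtain ⟨dd₁, dd₂⟩ := deriv_pairOf (hv.deriv'.differentiable one_ne_zero)
  simp only [Ltilde, Jop, Aop, d₁, d₂, dd₁, dd₂] at h₁ h₂
  simp only [PairOf] at h₁ h₂
  have hn : ‖u x‖ ^ 2 = (u x).re ^ 2 + (u x).im ^ 2 := by
    rw [Complex.sq_norm, Complex.normSq_apply]; ring
  have r₁ := congrArg Complex.re h₁
  have r₂ := congrArg Complex.re h₂
  simp only [sq, Complex.add_re, Complex.sub_re, Complex.neg_re, Complex.mul_re, Complex.ofReal_re,
    Complex.ofReal_im, Complex.sub_im, Complex.neg_im, Complex.mul_im, Complex.re_ofNat,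
    Complex.im_ofNat] at r₁ r₂
  apply Complex.ext <;> simp only [Lop, hn, sq, Complex.ofReal_add, Complex.ofReal_mul,
    Complex.add_re, Complex.sub_re, Complex.neg_re, Complex.mul_re, Complex.ofReal_re,
    Complex.ofReal_im, Complex.add_im, Complex.sub_im, Complex.neg_im, Complex.mul_im, Complex.I_re,
    Complex.I_im, Complex.re_ofNat, Complex.im_ofNat, Complex.conj_re, Complex.conj_im]
  · linear_combination -r₂
  · linear_combination r₁

lemma re_mul_conj_lopAdj (d ζ μ : ℝ) (u g ψ : ℝ → ℂ) (x : ℝ) :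
    (g x * conj (LopAdj d ζ μ u ψ x)).re
      = (-(d : ℂ) * g x * conj (deriv (deriv ψ) x)
          + (((ζ : ℂ) - Complex.I * μ - 2 * ((‖u x‖ ^ 2 : ℝ) : ℂ)) * g x
            - u x ^ 2 * conj (g x)) * conj (ψ x)).re := by
  simp only [LopAdj, map_add, map_sub, map_mul, map_neg, map_ofNat, Complex.conj_ofReal,
    Complex.conj_I, Complex.add_re, Complex.sub_re, Complex.mul_re, Complex.mul_im,
    Complex.neg_re, Complex.neg_im, Complex.conj_re, Complex.conj_im, Complex.ofReal_re,
    Complex.ofReal_im, Complex.I_re, Complex.I_im, sq, Complex.add_im, Complex.sub_im]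
  ring

lemma re_intervalIntegral_lop_mul_conj (d ζ μ : ℝ) {u g ψ : ℝ → ℂ} (hu : Continuous u)
    (hg : ContDiff ℝ 2 g) (hψ : ContDiff ℝ 2 ψ) (hgp : Per g) (hψp : Per ψ) :
    (∫ x in (-π)..π, Lop d ζ μ u g x * conj (ψ x)).re
      = (∫ x in (-π)..π, g x * conj (LopAdj d ζ μ u ψ x)).re := by
  have hg'' : Continuous (deriv (deriv g)) := hg.deriv'.continuous_deriv_one
  have hψ'' : Continuous (deriv (deriv ψ)) := hψ.deriv'.continuous_deriv_one
  have hψc := hψ.continuous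
  have hgc := hg.continuous
  have hibp := Per.intervalIntegral_deriv_deriv_add_mul_conj (-d)
    (h := fun x => ((ζ : ℂ) - Complex.I * μ - 2 * ((‖u x‖ ^ 2 : ℝ) : ℂ)) * g x
      - u x ^ 2 * conj (g x)) hg hψ (by fun_prop) hgp hψp
  have hLψ : Continuous (LopAdj d ζ μ u ψ) := by unfold LopAdj; fun_prop
  calc (∫ x in (-π)..π, Lop d ζ μ u g x * conj (ψ x)).re
      = (∫ x in (-π)..π, (-(d : ℂ) * deriv (deriv g) x + (((ζ : ℂ) - Complex.I * μ
          - 2 * ((‖u x‖ ^ 2 : ℝ) : ℂ)) * g x - u x ^ 2 * conj (g x))) * conj (ψ x)).re := by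
        simp only [Lop, add_sub_assoc]
    _ = (∫ x in (-π)..π, g x * conj (LopAdj d ζ μ u ψ x)).re := by
        rw [hibp]
        exact re_intervalIntegral_congr (by fun_prop) (by fun_prop)
          fun x => (re_mul_conj_lopAdj d ζ μ u g ψ x).symm

/-- The derivative of `u ↦ LopAdj d ζ μ u ψ` in the direction `w`. -/
def lopAdjDeriv (u w ψ : ℝ → ℂ) : ℝ → ℂ := fun x =>
  -2 * (w x * conj (u x) + u x * conj (w x)) * ψ x - 2 * u x * w x * conj (ψ x)

/-- Both sides are `-D³G(u x)[a x, b x, ψ x]` for `G(z) = |z|⁴ / 4`, the potential whose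
gradient for the real inner product `Re (z * conj w)` is the nonlinearity `|z|² z`. -/
lemma re_mul_conj_lopAdjDeriv_comm (u a b ψ : ℝ → ℂ) (x : ℝ) :
    (a x * conj (lopAdjDeriv u b ψ x)).re = (b x * conj (lopAdjDeriv u a ψ x)).re := by
  simp only [lopAdjDeriv, map_sub, map_mul, map_add, map_ofNat, Complex.conj_conj, Complex.sub_re,
    Complex.mul_re, Complex.mul_im, Complex.add_re, Complex.add_im, Complex.conj_re,
    Complex.conj_im, Complex.sub_im, Complex.re_ofNat, Complex.im_ofNat, Complex.neg_re,
    Complex.neg_im]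
  ring

lemma hasDerivAt_lopAdj (d ζ μ : ℝ) {u ψ : ℝ → ℂ} (hu : Differentiable ℝ u)
    (hψ : ContDiff ℝ 3 ψ) (x : ℝ) :
    HasDerivAt (LopAdj d ζ μ u ψ)
      (LopAdj d ζ μ u (deriv ψ) x + lopAdjDeriv u (deriv u) ψ x) x := by
  have hψ₁ := (hψ.differentiable (by norm_num) x).hasDerivAt
  have hψ₃ := (hψ.deriv'.deriv'.differentiable one_ne_zero x).hasDerivAt
  have hu₁ := (hu x).hasDerivAt
  have := ((hψ₃.const_mul (-(d : ℂ))).add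
    (((hu₁.ofReal_norm_sq.const_mul 2).const_sub (ζ + Complex.I * μ)).mul hψ₁)).sub
    ((hu₁.pow 2).mul hψ₁.star)
  refine this.congr_deriv ?_
  simp only [LopAdj, lopAdjDeriv, Pi.pow_apply, Complex.star_def]
  ring

lemma hasDerivAt_lopAdj_param (d ζ μ : ℝ) {u du : ℝ × ℝ → ℂ} (ψ : ℝ → ℂ) {x ε : ℝ}
    (hu : HasDerivAt (fun e => u (x, e)) (du (x, ε)) ε) :
    HasDerivAt (fun e => LopAdj d ζ μ (fun y => u (y, e)) ψ x)
      (lopAdjDeriv (fun y => u (y, ε)) (fun y => du (y, ε)) ψ x) ε := by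
  have := ((((hu.ofReal_norm_sq.const_mul 2).const_sub (ζ + Complex.I * μ)).mul_const
    (ψ x)).const_add (-(d : ℂ) * deriv (deriv ψ) x)).fun_sub
    ((hu.fun_pow 2).mul_const (conj (ψ x)))
  refine this.congr_deriv ?_
  simp only [lopAdjDeriv]
  ring

lemma lopAdj_deriv_eq_neg_lopAdjDeriv {d ζ μ : ℝ} {u ψ : ℝ → ℂ} (hu : Differentiable ℝ u)
    (hψ : ContDiff ℝ 3 ψ) (hker : ∀ x, LopAdj d ζ μ u ψ x = 0) (x : ℝ) :
    LopAdj d ζ μ u (deriv ψ) x = -lopAdjDeriv u (deriv u) ψ x := by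
  have h := (hasDerivAt_lopAdj d ζ μ hu hψ x).deriv
  rw [show LopAdj d ζ μ u ψ = fun _ => 0 from funext hker, deriv_const] at h
  linear_combination -h

lemma re_intervalIntegral_mul_conj_lopAdj_deriv {d ζ μ : ℝ} {u w ψ : ℝ → ℂ}
    (hu : ContDiff ℝ 1 u) (hw : Continuous w) (hψ : ContDiff ℝ 3 ψ)
    (hker : ∀ x, LopAdj d ζ μ u ψ x = 0) :
    (∫ x in (-π)..π, w x * conj (LopAdj d ζ μ u (deriv ψ) x)).re
      = -(∫ x in (-π)..π, deriv u x * conj (lopAdjDeriv u w ψ x)).re := by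
  have huc := hu.continuous
  have hu' := hu.continuous_deriv le_rfl
  have hψc := hψ.continuous
  have hψ' := hψ.continuous_deriv (by norm_num)
  have hψ''' : Continuous (deriv (deriv (deriv ψ))) := hψ.deriv'.deriv'.continuous_deriv_one
  rw [← Complex.neg_re, ← intervalIntegral.integral_neg]
  refine re_intervalIntegral_congr (by unfold LopAdj; fun_prop)
    (by unfold lopAdjDeriv; fun_prop) fun x => ?_
  rw [lopAdj_deriv_eq_neg_lopAdjDeriv (hu.differentiable one_ne_zero) hψ hker x, map_neg,
    mul_neg, Complex.neg_re, Complex.neg_re, re_mul_conj_lopAdjDeriv_comm]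

lemma contDiff_three_of_lopAdj_eq_zero {d ζ μ : ℝ} (hd : d ≠ 0) {u ψ : ℝ → ℂ}
    (hu : ContDiff ℝ 1 u) (hψ : ContDiff ℝ 2 ψ) (hker : ∀ x, LopAdj d ζ μ u ψ x = 0) :
    ContDiff ℝ 3 ψ := by
  have hψ'' : deriv (deriv ψ) = fun x =>
      (((ζ : ℂ) + Complex.I * μ - 2 * (u x * conj (u x))) * ψ x - u x ^ 2 * conj (ψ x)) / d := by
    funext x
    have h := hker x
    simp only [LopAdj, ofReal_norm_sq_eq_mul_conj] at h
    have hd' : (d : ℂ) ≠ 0 := Complex.ofReal_ne_zero.mpr hd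
    field_simp
    linear_combination -h
  have h₁ : ContDiff ℝ 1 (deriv (deriv ψ)) := by
    rw [hψ'']
    have := hψ.of_le one_le_two
    fun_prop
  rw [show (3 : WithTop ℕ∞) = 1 + 1 + 1 from rfl, contDiff_succ_iff_deriv, contDiff_succ_iff_deriv]
  exact ⟨hψ.differentiable two_ne_zero, by simp, hψ.deriv'.differentiable one_ne_zero, by simp, h₁⟩

lemma integral_identity_of_ltilde_pairOf {d ζ μ ε lam : ℝ} {V : ℝ → ℝ} {u v φ : ℝ → ℂ}
    (hV : Continuous V) (hu : Continuous u) (hv : ContDiff ℝ 2 v) (hvp : Per v)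
    (hφ : ContDiff ℝ 2 φ) (hφp : Per φ)
    (heig : ∀ x, (Ltilde d ζ μ ε V u (PairOf v)).1 x = (lam : ℂ) * (PairOf v).1 x ∧
      (Ltilde d ζ μ ε V u (PairOf v)).2 x = (lam : ℂ) * (PairOf v).2 x) :
    (∫ x in (-π)..π, v x * conj (LopAdj d ζ μ u φ x)).re
        + ε * (∫ x in (-π)..π, Complex.I * V x * deriv v x * conj (φ x)).re
      = lam * (∫ x in (-π)..π, Complex.I * v x * conj (φ x)).re := by
  have hv'' : Continuous (deriv (deriv v)) := hv.deriv'.continuous_deriv_one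
  have hv' : Continuous (deriv v) := hv.continuous_deriv one_le_two
  have hφc := hφ.continuous
  have hvc := hv.continuous
  have hint : ∫ x in (-π)..π, Lop d ζ μ u v x * conj (φ x)
        + ε * (Complex.I * V x * deriv v x * conj (φ x))
      = ∫ x in (-π)..π, lam * (Complex.I * v x * conj (φ x)) :=
    intervalIntegral.integral_congr fun x _ => by
      linear_combination conj (φ x) * lop_add_eq_of_ltilde_pairOf hv heig x
  rw [intervalIntegral.integral_add (by apply Continuous.intervalIntegrable; unfold Lop; fun_prop)
      (by apply Continuous.intervalIntegrable; fun_prop),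
    intervalIntegral.integral_const_mul, intervalIntegral.integral_const_mul] at hint
  have hre := congrArg Complex.re hint
  rwa [Complex.add_re, Complex.re_ofReal_mul, Complex.re_ofReal_mul,
    re_intervalIntegral_lop_mul_conj d ζ μ hu hv hφ hvp hφp] at hre

lemma integral_identity_of_statSol {d ζ μ f₀ ε : ℝ} {V : ℝ → ℝ} {u ψ : ℝ → ℂ}
    (hV : Continuous V) (hu : StatSol d ζ μ f₀ ε V u) (hψ : ContDiff ℝ 2 ψ) (hψp : Per ψ) :
    (∫ x in (-π)..π, -(d : ℂ) * u x * conj (deriv (deriv ψ) x)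
        + (((ζ : ℂ) - Complex.I * μ) * u x - ((‖u x‖ ^ 2 : ℝ) : ℂ) * u x + Complex.I * f₀)
          * conj (ψ x))
      + ε * ∫ x in (-π)..π, Complex.I * V x * deriv u x * conj (ψ x) = 0 := by
  obtain ⟨hu₂, hup, hsol⟩ := hu
  have hu' : Continuous (deriv u) := hu₂.continuous_deriv one_le_two
  have hψ'' : Continuous (deriv (deriv ψ)) := hψ.deriv'.continuous_deriv_one
  have huc := hu₂.continuous
  have hψc := hψ.continuous
  have hibp := Per.intervalIntegral_deriv_deriv_add_mul_conj (-d) (h := fun x =>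
    Complex.I * ε * V x * deriv u x + ((ζ : ℂ) - Complex.I * μ) * u x
      - ((‖u x‖ ^ 2 : ℝ) : ℂ) * u x + Complex.I * f₀) hu₂ hψ (by fun_prop) hup hψp
  rw [← intervalIntegral.integral_const_mul, ← intervalIntegral.integral_add
    (by apply Continuous.intervalIntegrable; fun_prop)
    (by apply Continuous.intervalIntegrable; fun_prop)]
  calc _ = ∫ x in (-π)..π, (-(d : ℂ) * deriv (deriv u) x + (Complex.I * ε * V x * deriv u x
        + ((ζ : ℂ) - Complex.I * μ) * u x - ((‖u x‖ ^ 2 : ℝ) : ℂ) * u x + Complex.I * f₀))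
          * conj (ψ x) := by
        rw [hibp]
        exact intervalIntegral.integral_congr fun x _ => by ring
    _ = 0 := by
        simp only [← add_assoc, ← add_sub_assoc, hsol, zero_mul, intervalIntegral.integral_zero]

section Perturbation

variable {d ζ μ : ℝ} {V : ℝ → ℝ} {S : Set ℝ} {u du : ℝ × ℝ → ℂ}

theorem deriv_eq_of_ltilde_pairOf_eq {v dv : ℝ × ℝ → ℂ} {φ : ℝ → ℂ} {lam : ℝ → ℝ}
    (hV : Continuous V) (hS : IsOpen S) (h0 : (0 : ℝ) ∈ S)
    (hu : ContinuousOn u (univ ×ˢ S)) (hdu : ContinuousOn du (univ ×ˢ S))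
    (hu' : ∀ ε ∈ S, ∀ x, HasDerivAt (fun e => u (x, e)) (du (x, ε)) ε)
    (hv : ContDiffOn ℝ 2 v (univ ×ˢ S)) (hdv : ContinuousOn dv (univ ×ˢ S))
    (hv' : ∀ ε ∈ S, ∀ x, HasDerivAt (fun e => v (x, e)) (dv (x, ε)) ε)
    (hvp : ∀ ε ∈ S, Per fun x => v (x, ε))
    (hφ : ContDiff ℝ 2 φ) (hφp : Per φ)
    (hker : ∀ x, LopAdj d ζ μ (fun y => u (y, 0)) φ x = 0)
    (heig : ∀ ε ∈ S, ∀ x,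
      (Ltilde d ζ μ ε V (fun y => u (y, ε)) (PairOf fun y => v (y, ε))).1 x
          = (lam ε : ℂ) * (PairOf fun y => v (y, ε)).1 x ∧
      (Ltilde d ζ μ ε V (fun y => u (y, ε)) (PairOf fun y => v (y, ε))).2 x
          = (lam ε : ℂ) * (PairOf fun y => v (y, ε)).2 x)
    (hlam : DifferentiableAt ℝ lam 0) (hlam₀ : lam 0 = 0)
    (hnorm : (∫ x in (-π)..π, Complex.I * v (x, 0) * conj (φ x)).re = 1) :
    deriv lam 0
      = (∫ x in (-π)..π,
          v (x, 0) * conj (lopAdjDeriv (fun y => u (y, 0)) (fun y => du (y, 0)) φ x)).re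
        + (∫ x in (-π)..π, Complex.I * V x * deriv (fun y => v (y, 0)) x * conj (φ x)).re := by
  have hS₀ : S ∈ 𝓝 0 := hS.mem_nhds h0
  have hvc := hv.continuousOn
  have hvx := (hv.of_le one_le_two).continuousOn_deriv_fst hS
  have hφc := hφ.continuous
  have hφ'' : Continuous (deriv (deriv φ)) := hφ.deriv'.continuous_deriv_one
  have hF : ContinuousOn (fun p => v p * conj (LopAdj d ζ μ (fun y => u (y, p.2)) φ p.1))
      (univ ×ˢ S) := by simp only [LopAdj, Prod.mk.eta]; fun_prop
  have hF' : ContinuousOn (fun p => dv p * conj (LopAdj d ζ μ (fun y => u (y, p.2)) φ p.1)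
      + v p * conj (lopAdjDeriv (fun y => u (y, p.2)) (fun y => du (y, p.2)) φ p.1))
      (univ ×ˢ S) := by simp only [LopAdj, lopAdjDeriv, Prod.mk.eta]; fun_prop
  have hP := hasDerivAt_intervalIntegral_of_continuousOn hF hF' hS₀
    (fun ε hε x => (hv' ε hε x).mul (hasDerivAt_lopAdj_param d ζ μ φ (hu' ε hε x)).star) (-π) π
  have hQ := continuousAt_intervalIntegral_of_continuousOn
    (F := fun p => Complex.I * V p.1 * deriv (fun y => v (y, p.2)) p.1 * conj (φ p.1))
    (((continuousOn_const.mul (by fun_prop)).mul hvx).mul (by fun_prop)) hS₀ (-π) π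
  have hR := continuousAt_intervalIntegral_of_continuousOn
    (F := fun p => Complex.I * v p * conj (φ p.1)) (by fun_prop) hS₀ (-π) π
  have key := hP.re_comp.add_eq_mul_of_eventually_add_mul_eq
    (Complex.continuous_re.continuousAt.comp hQ) (Complex.continuous_re.continuousAt.comp hR)
    hlam.hasDerivAt hlam₀ (eventually_of_mem hS₀ fun ε hε =>
      integral_identity_of_ltilde_pairOf hV (hu.continuous_slice hε) (hv.contDiff_slice hε)
        (hvp ε hε) hφ hφp (heig ε hε))
  simp only [Function.comp_def, hker, map_zero, mul_zero, zero_add] at key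
  rw [key, hnorm, mul_one]

theorem re_intervalIntegral_mul_conj_lopAdj_add_eq_zero {f₀ : ℝ} {ψ : ℝ → ℂ}
    (hV : Continuous V) (hS : IsOpen S) (h0 : (0 : ℝ) ∈ S)
    (hu : ContDiffOn ℝ 1 u (univ ×ˢ S)) (hdu : ContinuousOn du (univ ×ˢ S))
    (hu' : ∀ ε ∈ S, ∀ x, HasDerivAt (fun e => u (x, e)) (du (x, ε)) ε)
    (hsol : ∀ ε ∈ S, StatSol d ζ μ f₀ ε V fun x => u (x, ε))
    (hψ : ContDiff ℝ 2 ψ) (hψp : Per ψ) :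
    (∫ x in (-π)..π, du (x, 0) * conj (LopAdj d ζ μ (fun y => u (y, 0)) ψ x)).re
      + (∫ x in (-π)..π, Complex.I * V x * deriv (fun y => u (y, 0)) x * conj (ψ x)).re
      = 0 := by
  have hS₀ : S ∈ 𝓝 0 := hS.mem_nhds h0
  have huc := hu.continuousOn
  have hux := hu.continuousOn_deriv_fst hS
  have hψc := hψ.continuous
  have hψ'' : Continuous (deriv (deriv ψ)) := hψ.deriv'.continuous_deriv_one
  have hF : ContinuousOn (fun p => -(d : ℂ) * u p * conj (deriv (deriv ψ) p.1)
      + (((ζ : ℂ) - Complex.I * μ) * u p - ((‖u p‖ ^ 2 : ℝ) : ℂ) * u p + Complex.I * f₀)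
        * conj (ψ p.1)) (univ ×ˢ S) := by fun_prop
  have hF' : ContinuousOn (fun p => -(d : ℂ) * du p * conj (deriv (deriv ψ) p.1)
      + (((ζ : ℂ) - Complex.I * μ) * du p - ((du p * conj (u p) + u p * conj (du p)) * u p
        + ((‖u p‖ ^ 2 : ℝ) : ℂ) * du p)) * conj (ψ p.1)) (univ ×ˢ S) := by fun_prop
  have hP := hasDerivAt_intervalIntegral_of_continuousOn hF hF' hS₀ (fun ε hε x => by
      have hux := hu' ε hε x
      dsimp only
      exact ((hux.const_mul _).mul_const _).fun_add ((((hux.const_mul _).fun_sub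
        (hux.ofReal_norm_sq.fun_mul hux)).add_const _).mul_const _)) (-π) π
  have hQ := continuousAt_intervalIntegral_of_continuousOn
    (F := fun p => Complex.I * V p.1 * deriv (fun y => u (y, p.2)) p.1 * conj (ψ p.1))
    (((continuousOn_const.mul (by fun_prop)).mul hux).mul (by fun_prop)) hS₀ (-π) π
  have key := hP.re_comp.add_eq_mul_of_eventually_add_mul_eq
    (Complex.continuous_re.continuousAt.comp hQ) (continuousAt_const (y := (0 : ℝ)))
    (hasDerivAt_const 0 0) rfl (eventually_of_mem hS₀ fun ε hε => by
      have h := congrArg Complex.re (integral_identity_of_statSol hV (hsol ε hε) hψ hψp)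
      rwa [Complex.add_re, Complex.re_ofReal_mul, Complex.zero_re, ← zero_mul 0] at h)
  simp only [Function.comp_def, mul_zero] at key
  refine Eq.trans ?_ key
  congr 1
  have hL : ContinuousOn (fun p => du p * conj (LopAdj d ζ μ (fun y => u (y, p.2)) ψ p.1))
      (univ ×ˢ S) := by simp only [LopAdj, Prod.mk.eta]; fun_prop
  refine re_intervalIntegral_congr (hL.continuous_slice h0) (hF'.continuous_slice h0) fun x =>
    (re_mul_conj_lopAdj d ζ μ _ (fun y => du (y, 0)) ψ x).trans ?_
  simp only [ofReal_norm_sq_eq_mul_conj]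
  congr 1
  ring

end Perturbation

theorem stmt_5_general
    (d ζ μ f₀ : ℝ) (hd : d ≠ 0)
    (V : ℝ → ℝ) (hVper : Function.Periodic V (2 * Real.pi)) (hV : ContDiff ℝ 1 V)
    (ustar φstar : ℝ → ℂ)
    (hustarC : ContDiff ℝ 2 ustar) (hustarPer : Per ustar)
    (hφC : ContDiff ℝ 2 φstar) (hφper : Per φstar)
    (hφker : ∀ x, LopAdj d ζ μ ustar φstar x = 0)
    (hnorm : (∫ x in (-Real.pi)..Real.pi,
        Complex.I * deriv ustar x * (starRingEnd ℂ) (φstar x)).re = 1)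
    (εs : ℝ) (hεs : 0 < εs)
    (u v : ℝ → ℝ → ℂ) (lam₀ : ℝ → ℝ)
    (huC3 : ContDiffOn ℝ 3 (fun p : ℝ × ℝ => u p.2 p.1)
      ((Set.univ : Set ℝ) ×ˢ Set.Ioo (-εs) εs))
    (hvC3 : ContDiffOn ℝ 3 (fun p : ℝ × ℝ => v p.2 p.1)
      ((Set.univ : Set ℝ) ×ˢ Set.Ioo (-εs) εs))
    (hlamC1 : ContDiffOn ℝ 1 lam₀ (Set.Ioo (-εs) εs))
    (hvper : ∀ ε ∈ Set.Ioo (-εs) εs, Per (v ε))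
    (hsol : ∀ ε ∈ Set.Ioo (-εs) εs, StatSol d ζ μ f₀ ε V (u ε))
    (heig : ∀ ε ∈ Set.Ioo (-εs) εs, ∀ x : ℝ,
      (Ltilde d ζ μ ε V (u ε) (PairOf (v ε))).1 x
          = ((lam₀ ε : ℝ) : ℂ) * (PairOf (v ε)).1 x ∧
      (Ltilde d ζ μ ε V (u ε) (PairOf (v ε))).2 x
          = ((lam₀ ε : ℝ) : ℂ) * (PairOf (v ε)).2 x)
    (hu0 : u 0 = ustar) (hlam0 : lam₀ 0 = 0) (hv0 : v 0 = deriv ustar) :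
    deriv lam₀ 0 =
      -(∫ x in (-Real.pi)..Real.pi,
          Complex.I * ((deriv V x : ℝ) : ℂ) * deriv ustar x * (starRingEnd ℂ) (φstar x)).re := by
  have h0 : (0 : ℝ) ∈ Ioo (-εs) εs := ⟨neg_lt_zero.mpr hεs, hεs⟩
  obtain ⟨du, hdu, hu'⟩ := (huC3.of_le (by norm_num)).exists_hasDerivAt_snd isOpen_Ioo
  obtain ⟨dv, hdv, hv'⟩ := (hvC3.of_le (by norm_num)).exists_hasDerivAt_snd isOpen_Ioo
  have hφ₃ := contDiff_three_of_lopAdj_eq_zero hd (hustarC.of_le one_le_two) hφC hφker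
  have hE₁ := deriv_eq_of_ltilde_pairOf_eq hV.continuous isOpen_Ioo h0 huC3.continuousOn hdu hu'
    (hvC3.of_le (by norm_num)) hdv hv' hvper hφC hφper (by simpa [hu0] using hφker) heig
    ((hlamC1.differentiableOn one_ne_zero).differentiableAt (Ioo_mem_nhds h0.1 h0.2)) hlam0
    (by simpa [hv0] using hnorm)
  have hE₂ := re_intervalIntegral_mul_conj_lopAdj_add_eq_zero hV.continuous isOpen_Ioo h0
    (huC3.of_le (by norm_num)) hdu hu' hsol hφ₃.deriv' (Function.Periodic.deriv hφper)
  simp only [hu0, hv0] at hE₁ hE₂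
  rw [re_intervalIntegral_mul_conj_lopAdj_deriv (hustarC.of_le one_le_two)
    (hdu.continuous_slice h0) hφ₃ hφker] at hE₂
  linarith [Per.re_intervalIntegral_potential hV hVper hustarC.deriv'
    (Function.Periodic.deriv hustarPer) (hφC.of_le one_le_two) hφper]

/-- **Lemma (derivative of the critical eigenvalue; Lemma 6 of the paper):**
`λ₀'(0) = - Re ∫ i V'(x) u*'(x) conj(φ*(x)) dx`. -/
theorem stmt_5
    (d ζ μ f₀ : ℝ) (hd : d ≠ 0)
    (V : ℝ → ℝ) (hVper : Function.Periodic V (2 * Real.pi)) (hV : ContDiff ℝ 1 V)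
    (ustar φstar : ℝ → ℂ)
    (hustarC : ContDiff ℝ 2 ustar) (hustarPer : Per ustar)
    (hustar : StatSol d ζ μ f₀ 0 V ustar)
    (hφC : ContDiff ℝ 2 φstar) (hφper : Per φstar)
    (hφker : ∀ x, LopAdj d ζ μ ustar φstar x = 0)
    (hnorm : (∫ x in (-Real.pi)..Real.pi,
        Complex.I * deriv ustar x * (starRingEnd ℂ) (φstar x)).re = 1)
    (εs : ℝ) (hεs : 0 < εs)
    (u v : ℝ → ℝ → ℂ) (lam₀ : ℝ → ℝ)
    (huC3 : ContDiffOn ℝ 3 (fun p : ℝ × ℝ => u p.2 p.1)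
      ((Set.univ : Set ℝ) ×ˢ Set.Ioo (-εs) εs))
    (hvC3 : ContDiffOn ℝ 3 (fun p : ℝ × ℝ => v p.2 p.1)
      ((Set.univ : Set ℝ) ×ˢ Set.Ioo (-εs) εs))
    (hlamC1 : ContDiffOn ℝ 1 lam₀ (Set.Ioo (-εs) εs))
    (huper : ∀ ε ∈ Set.Ioo (-εs) εs, Per (u ε))
    (hvper : ∀ ε ∈ Set.Ioo (-εs) εs, Per (v ε))
    (hsol : ∀ ε ∈ Set.Ioo (-εs) εs, StatSol d ζ μ f₀ ε V (u ε))
    (heig : ∀ ε ∈ Set.Ioo (-εs) εs, ∀ x : ℝ,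
      (Ltilde d ζ μ ε V (u ε) (PairOf (v ε))).1 x
          = ((lam₀ ε : ℝ) : ℂ) * (PairOf (v ε)).1 x ∧
      (Ltilde d ζ μ ε V (u ε) (PairOf (v ε))).2 x
          = ((lam₀ ε : ℝ) : ℂ) * (PairOf (v ε)).2 x)
    (hu0 : u 0 = ustar) (hlam0 : lam₀ 0 = 0) (hv0 : v 0 = deriv ustar) :
    deriv lam₀ 0 =
      -(∫ x in (-Real.pi)..Real.pi,
          Complex.I * ((deriv V x : ℝ) : ℂ) * deriv ustar x * (starRingEnd ℂ) (φstar x)).re :=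
  stmt_5_general d ζ μ f₀ hd V hVper hV ustar φstar hustarC hustarPer hφC hφper hφker hnorm εs hεs u
    v lam₀ huC3 hvC3 hlamC1 hvper hsol heig hu0 hlam0 hv0
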